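/- arXiv:2102.01965 — 4 statements merged into one kernel-verified Lean document; each statement's English description precedes it below -/
import Mathlib

section
/- Let {W_j}_{j∈J} be closed subspaces of H, {v_j}_{j∈J} a bounded family of positive weights with B = sup_j v_j², and Λ_j ∈ B(H, H_j). Suppose (I) there exists A > 0 such that Σ_{j∈J} ‖Λ_j P_{W_j} f‖² ≤ (1/A)‖f‖² for all f ∈ H, and (II) {v_j P_{W_j} Λ_j* Λ_j P_{W_j}}_{j∈J} is a resolution of the identity operator on H. Then Λ = {(W_j, Λ_j, v_j)} is a g-fusion frame for H with bounds A and B/A. -/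
/-
Pairing the resolution of the identity `f = ∑ v j • P_j Λ_j* Λ_j P_j f` with `f` gives
`‖f‖² = ∑ v j x j`, where `x j = ‖Λ_j P_j f‖²` and `∑ x j ≤ ‖f‖² / A`. Cauchy–Schwarz yields
`‖f‖⁴ ≤ (∑ v j² x j) (∑ x j) ≤ (∑ v j² x j) ‖f‖² / A`, which is the lower bound, while
`∑ v j² x j ≤ B ∑ x j ≤ B ‖f‖² / A` is the upper bound.
-/

open ContinuousLinearMap

noncomputable def proj {E : Type*} [NormedAddCommGroup E] [InnerProductSpace ℂ E]
    (W : Submodule ℂ E) [CompleteSpace W] : E →L[ℂ] E :=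
  W.subtypeL.comp (W.orthogonalProjection)

theorem tsum_sq_le_tsum_mul_tsum_of_sq_le_mul {ι : Type*} {r f g : ι → ℝ}
    (hf : ∀ i, 0 ≤ f i) (hg : ∀ i, 0 ≤ g i) (ht : ∀ i, r i ^ 2 ≤ f i * g i)
    (hr : Summable r) (hfs : Summable f) (hgs : Summable g) :
    (∑' i, r i) ^ 2 ≤ (∑' i, f i) * ∑' i, g i :=
  le_of_tendsto_of_tendsto' (hr.hasSum.pow 2) (Filter.Tendsto.mul hfs.hasSum hgs.hasSum) fun s =>
    Finset.sum_sq_le_sum_mul_sum_of_sq_le_mul s (fun i _ => hf i) (fun i _ => hg i)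
      fun i _ => ht i

section WeightedSums

variable {ι : Type*} {v x : ι → ℝ} {A B N : ℝ}

theorem summable_sq_mul_of_sq_le (hx : ∀ j, 0 ≤ x j) (hxs : Summable x)
    (hB : ∀ j, v j ^ 2 ≤ B) : Summable fun j => v j ^ 2 * x j :=
  (hxs.mul_left B).of_nonneg_of_le (fun j => mul_nonneg (sq_nonneg _) (hx j))
    fun j => mul_le_mul_of_nonneg_right (hB j) (hx j)

theorem mul_le_tsum_sq_mul (hA : 0 < A) (hx : ∀ j, 0 ≤ x j) (hxs : Summable x)
    (hxA : ∑' j, x j ≤ 1 / A * N) (hvx : HasSum (fun j => v j * x j) N)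
    (hvvx : Summable fun j => v j ^ 2 * x j) :
    A * N ≤ ∑' j, v j ^ 2 * x j := by
  set S := ∑' j, v j ^ 2 * x j
  have hS : 0 ≤ S := tsum_nonneg fun j => mul_nonneg (sq_nonneg _) (hx j)
  have hN : 0 ≤ N := by
    have hT : 0 ≤ ∑' j, x j := tsum_nonneg hx
    exact nonneg_of_mul_nonneg_right (hT.trans hxA) (by positivity)
  have hCS : N ^ 2 ≤ S * ∑' j, x j := by
    rw [← hvx.tsum_eq]
    exact tsum_sq_le_tsum_mul_tsum_of_sq_le_mul
      (fun j => mul_nonneg (sq_nonneg _) (hx j)) hx (fun j => (by ring : (v j * x j) ^ 2 = _).le)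
      hvx.summable hvvx hxs
  have hAN : A * N * N ≤ S * N :=
    calc A * N * N = A * N ^ 2 := by ring
      _ ≤ A * (S * (1 / A * N)) := by gcongr; exact hCS.trans (by gcongr)
      _ = S * N := by field_simp
  rcases hN.eq_or_lt with hN0 | hNpos
  · simpa [← hN0] using hS
  · exact le_of_mul_le_mul_right hAN hNpos

theorem tsum_sq_mul_le (hx : ∀ j, 0 ≤ x j) (hxs : Summable x)
    (hxA : ∑' j, x j ≤ 1 / A * N) (hvx : HasSum (fun j => v j * x j) N)
    (hB : ∀ j, v j ^ 2 ≤ B) :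
    ∑' j, v j ^ 2 * x j ≤ B / A * N := by
  rcases isEmpty_or_nonempty ι with hι | ⟨⟨j₀⟩⟩
  · obtain rfl : N = 0 := hvx.unique hasSum_empty
    simp
  have hB0 : 0 ≤ B := (sq_nonneg _).trans (hB j₀)
  calc ∑' j, v j ^ 2 * x j
      ≤ ∑' j, B * x j := (summable_sq_mul_of_sq_le hx hxs hB).tsum_le_tsum
        (fun j => mul_le_mul_of_nonneg_right (hB j) (hx j)) (hxs.mul_left B)
    _ = B * ∑' j, x j := tsum_mul_left
    _ ≤ B * (1 / A * N) := mul_le_mul_of_nonneg_left hxA hB0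
    _ = B / A * N := by ring

end WeightedSums

theorem inner_proj_adjoint_comp_proj {E F : Type*} [NormedAddCommGroup E]
    [InnerProductSpace ℂ E] [CompleteSpace E] [NormedAddCommGroup F] [InnerProductSpace ℂ F]
    [CompleteSpace F] (W : Submodule ℂ E) [CompleteSpace W] (T : E →L[ℂ] F)
    (f : E) : inner ℂ f (proj W (adjoint T (T (proj W f)))) = (‖T (proj W f)‖ ^ 2 : ℂ) := by
  change inner ℂ f (W.starProjection _) = _
  rw [← W.inner_starProjection_left_eq_right]
  exact (adjoint_inner_right T _ _).trans (inner_self_eq_norm_sq_to_K _)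

theorem hasSum_mul_norm_sq_of_hasSum_resolution {ι E : Type*} [NormedAddCommGroup E]
    [InnerProductSpace ℂ E] [CompleteSpace E] {G : ι → Type*} [∀ j, NormedAddCommGroup (G j)]
    [∀ j, InnerProductSpace ℂ (G j)] [∀ j, CompleteSpace (G j)]
    (W : ι → Submodule ℂ E) [∀ j, CompleteSpace (W j)] (v : ι → ℝ) (Λ : ∀ j, E →L[ℂ] G j)
    {f : E} (hf : HasSum (fun j => v j • proj (W j) (adjoint (Λ j) (Λ j (proj (W j) f)))) f) :
    HasSum (fun j => v j * ‖Λ j (proj (W j) f)‖ ^ 2) (‖f‖ ^ 2) := by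
  have h := hf.mapL (innerSL ℂ f)
  simp only [innerSL_apply_apply, inner_self_eq_norm_sq_to_K, RCLike.real_smul_eq_coe_smul (K := ℂ),
    inner_smul_right, inner_proj_adjoint_comp_proj] at h
  rw [← Complex.hasSum_ofReal]
  push_cast
  exact h

theorem stmt4_general {ι E : Type*} [NormedAddCommGroup E] [InnerProductSpace ℂ E] [CompleteSpace E]
    {G : ι → Type*} [∀ j, NormedAddCommGroup (G j)] [∀ j, InnerProductSpace ℂ (G j)]
    [∀ j, CompleteSpace (G j)]
    (W : ι → Submodule ℂ E) [∀ j, CompleteSpace (W j)]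
    (v : ι → ℝ)
    (Λ : ∀ j, E →L[ℂ] G j)
    (A B : ℝ) (hA : 0 < A) (hB : ∀ j, (v j) ^ 2 ≤ B)
    (h1 : ∀ f : E, Summable (fun j => ‖Λ j (proj (W j) f)‖ ^ 2) ∧
      ∑' j, ‖Λ j (proj (W j) f)‖ ^ 2 ≤ 1 / A * ‖f‖ ^ 2)
    (h2 : ∀ f : E, HasSum
      (fun j => v j • proj (W j) (ContinuousLinearMap.adjoint (Λ j) (Λ j (proj (W j) f)))) f) :
    ∀ f : E,
      Summable (fun j => (v j) ^ 2 * ‖Λ j (proj (W j) f)‖ ^ 2) ∧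
      A * ‖f‖ ^ 2 ≤ ∑' j, (v j) ^ 2 * ‖Λ j (proj (W j) f)‖ ^ 2 ∧
      ∑' j, (v j) ^ 2 * ‖Λ j (proj (W j) f)‖ ^ 2 ≤ B / A * ‖f‖ ^ 2 := by
  intro f
  obtain ⟨hxs, hxA⟩ := h1 f
  have hx : ∀ j, 0 ≤ ‖Λ j (proj (W j) f)‖ ^ 2 := fun j => sq_nonneg _
  have hvx := hasSum_mul_norm_sq_of_hasSum_resolution W v Λ (h2 f)
  have hvvx := summable_sq_mul_of_sq_le hx hxs hB
  exact ⟨hvvx, mul_le_tsum_sq_mul hA hx hxs hxA hvx hvvx, tsum_sq_mul_le hx hxs hxA hvx hB⟩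

/-- sufficient conditions for a g-fusion frame with bounds A and B/A, where
B = sup_j v_j². -/
theorem stmt4 {ι E : Type*} [NormedAddCommGroup E] [InnerProductSpace ℂ E] [CompleteSpace E]
    {G : ι → Type*} [∀ j, NormedAddCommGroup (G j)] [∀ j, InnerProductSpace ℂ (G j)]
    [∀ j, CompleteSpace (G j)]
    (W : ι → Submodule ℂ E) [∀ j, CompleteSpace (W j)]
    (v : ι → ℝ) (hv : ∀ j, 0 < v j)
    (Λ : ∀ j, E →L[ℂ] G j)
    (A B : ℝ) (hA : 0 < A) (hB : ∀ j, (v j) ^ 2 ≤ B)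
    (h1 : ∀ f : E, Summable (fun j => ‖Λ j (proj (W j) f)‖ ^ 2) ∧
      ∑' j, ‖Λ j (proj (W j) f)‖ ^ 2 ≤ 1 / A * ‖f‖ ^ 2)
    (h2 : ∀ f : E, HasSum
      (fun j => v j • proj (W j) (ContinuousLinearMap.adjoint (Λ j) (Λ j (proj (W j) f)))) f) :
    ∀ f : E,
      Summable (fun j => (v j) ^ 2 * ‖Λ j (proj (W j) f)‖ ^ 2) ∧
      A * ‖f‖ ^ 2 ≤ ∑' j, (v j) ^ 2 * ‖Λ j (proj (W j) f)‖ ^ 2 ∧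
      ∑' j, (v j) ^ 2 * ‖Λ j (proj (W j) f)‖ ^ 2 ≤ B / A * ‖f‖ ^ 2 :=
  stmt4_general W v Λ A B hA hB h1 h2
end

section
/- Let Λ, Γ be g-fusion Bessel sequences in H with bounds D₁, D₂ and frame operator S_{ΓΛ}, and suppose S_{ΓΛ} is bounded below with ‖S_{ΓΛ} f‖ ≥ M‖f‖ for all f ∈ H. Then Λ is a g-fusion frame for H with lower bound M²/D₂ and upper bound D₁. -/
/-!
Put `g = S f`. Then `‖g‖² = Re ⟪g, S f⟫ = ∑ v_j w_j Re ⟪Γ_j P_{V_j} g, Λ_j P_{W_j} f⟫`, and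
Cauchy–Schwarz, first in each `G_j` and then in `ℓ²`, bounds this by
`(D₂ ‖g‖²)^{1/2} (∑ w_j² ‖Λ_j P_{W_j} f‖²)^{1/2}`. Hence `‖S f‖² ≤ D₂ ∑ w_j² ‖Λ_j P_{W_j} f‖²`,
and `M ‖f‖ ≤ ‖S f‖` turns this into the lower frame bound.
-/

open ContinuousLinearMap

theorem summable_mul_and_sq_tsum_mul_le {ι : Type*} {a b : ι → ℝ} (ha : ∀ i, 0 ≤ a i)
    (hb : ∀ i, 0 ≤ b i) (ha2 : Summable fun i => a i ^ 2) (hb2 : Summable fun i => b i ^ 2) :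
    Summable (fun i => a i * b i) ∧
      (∑' i, a i * b i) ^ 2 ≤ (∑' i, a i ^ 2) * ∑' i, b i ^ 2 := by
  simp only [← Real.rpow_two] at ha2 hb2 ⊢
  obtain ⟨hsum, hle⟩ := Real.summable_and_inner_le_Lp_mul_Lq_tsum_of_nonneg
    Real.HolderConjugate.two_two ha hb ha2 hb2
  refine ⟨hsum, ?_⟩
  have hab : 0 ≤ ∑' i, a i * b i := tsum_nonneg fun i => mul_nonneg (ha i) (hb i)
  have hA : 0 ≤ ∑' i, a i ^ (2 : ℝ) := tsum_nonneg fun i => Real.rpow_nonneg (ha i) _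
  have hB : 0 ≤ ∑' i, b i ^ (2 : ℝ) := tsum_nonneg fun i => Real.rpow_nonneg (hb i) _
  calc (∑' i, a i * b i) ^ (2 : ℝ)
      ≤ ((∑' i, a i ^ (2 : ℝ)) ^ (1 / 2 : ℝ) * (∑' i, b i ^ (2 : ℝ)) ^ (1 / 2 : ℝ)) ^ (2 : ℝ) :=
        Real.rpow_le_rpow hab hle zero_le_two
    _ = _ := by
      rw [Real.mul_rpow (Real.rpow_nonneg hA _) (Real.rpow_nonneg hB _), ← Real.rpow_mul hA,
        ← Real.rpow_mul hB]
      norm_num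

section GFusion

variable {ι E : Type*} [NormedAddCommGroup E] [InnerProductSpace ℂ E] [CompleteSpace E]
  {G : ι → Type*} [∀ j, NormedAddCommGroup (G j)] [∀ j, InnerProductSpace ℂ (G j)]
  [∀ j, CompleteSpace (G j)]

theorem inner_proj_adjoint {F : Type*} [NormedAddCommGroup F] [InnerProductSpace ℂ F]
    [CompleteSpace F] (V : Submodule ℂ E) [CompleteSpace V] (Γ : E →L[ℂ] F) (g : E) (y : F) :
    inner ℂ g (proj V (adjoint Γ y)) = inner ℂ (Γ (proj V g)) y := by
  rw [← adjoint_inner_right]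
  exact (Submodule.inner_starProjection_left_eq_right V g _).symm

theorem norm_sq_le_of_hasSum_synthesis (V : ι → Submodule ℂ E) [∀ j, CompleteSpace (V j)]
    (v : ι → ℝ) (Γ : ∀ j, E →L[ℂ] G j) {D : ℝ} (hD : 0 ≤ D) (x : ∀ j, G j)
    (hx : Summable fun j => ‖x j‖ ^ 2) {g : E}
    (hΓg : Summable (fun j => v j ^ 2 * ‖Γ j (proj (V j) g)‖ ^ 2) ∧
      ∑' j, v j ^ 2 * ‖Γ j (proj (V j) g)‖ ^ 2 ≤ D * ‖g‖ ^ 2)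
    (hg : HasSum (fun j => v j • proj (V j) (adjoint (Γ j) (x j))) g) :
    ‖g‖ ^ 2 ≤ D * ∑' j, ‖x j‖ ^ 2 := by
  set a : ι → ℝ := fun j => |v j| * ‖Γ j (proj (V j) g)‖
  set b : ι → ℝ := fun j => ‖x j‖
  have ha2 : ∀ j, a j ^ 2 = v j ^ 2 * ‖Γ j (proj (V j) g)‖ ^ 2 := fun j => by
    rw [mul_pow, sq_abs]
  have hre : HasSum (fun j => v j * RCLike.re (inner ℂ (Γ j (proj (V j) g)) (x j)))
      (‖g‖ ^ 2) := by
    have := (hg.mapL (innerSL ℂ g)).mapL Complex.reCLM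
    simpa [← Complex.coe_smul, inner_smul_real_right, inner_proj_adjoint, ← Complex.ofReal_pow]
      using this
  obtain ⟨hab, hCS⟩ := summable_mul_and_sq_tsum_mul_le (a := a) (b := b)
    (fun j => by positivity) (fun j => norm_nonneg _) (by simpa only [ha2] using hΓg.1) hx
  have hterm : ∀ j, v j * RCLike.re (inner ℂ (Γ j (proj (V j) g)) (x j)) ≤ a j * b j := fun j =>
    calc v j * RCLike.re (inner ℂ (Γ j (proj (V j) g)) (x j))
        ≤ |v j| * (‖Γ j (proj (V j) g)‖ * ‖x j‖) := by
          refine (le_abs_self _).trans ?_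
          rw [abs_mul]
          exact mul_le_mul_of_nonneg_left
            ((RCLike.abs_re_le_norm _).trans (norm_inner_le_norm _ _)) (abs_nonneg _)
      _ = a j * b j := by ring
  have hsum_le : ‖g‖ ^ 2 ≤ ∑' j, a j * b j :=
    hre.tsum_eq ▸ hre.summable.tsum_le_tsum hterm hab
  have hsq : (‖g‖ ^ 2) ^ 2 ≤ D * ‖g‖ ^ 2 * ∑' j, ‖x j‖ ^ 2 := calc
    (‖g‖ ^ 2) ^ 2 ≤ (∑' j, a j * b j) ^ 2 := pow_le_pow_left₀ (by positivity) hsum_le 2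
    _ ≤ (∑' j, a j ^ 2) * ∑' j, b j ^ 2 := hCS
    _ ≤ D * ‖g‖ ^ 2 * ∑' j, ‖x j‖ ^ 2 := by
      simp only [ha2]
      exact mul_le_mul_of_nonneg_right hΓg.2 (tsum_nonneg fun j => by positivity)
  rcases (sq_nonneg ‖g‖).eq_or_lt with hg0 | hg0
  · rw [← hg0]
    exact mul_nonneg hD (tsum_nonneg fun j => by positivity)
  · rw [sq, mul_assoc, mul_left_comm] at hsq
    exact le_of_mul_le_mul_left hsq hg0

theorem norm_sq_frameOperator_le (W V : ι → Submodule ℂ E) [∀ j, CompleteSpace (W j)]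
    [∀ j, CompleteSpace (V j)] (w v : ι → ℝ) (Λ Γ : ∀ j, E →L[ℂ] G j) {D : ℝ} (hD : 0 ≤ D)
    (S : E →L[ℂ] E) (f : E) (hΛf : Summable fun j => w j ^ 2 * ‖Λ j (proj (W j) f)‖ ^ 2)
    (hΓSf : Summable (fun j => v j ^ 2 * ‖Γ j (proj (V j) (S f))‖ ^ 2) ∧
      ∑' j, v j ^ 2 * ‖Γ j (proj (V j) (S f))‖ ^ 2 ≤ D * ‖S f‖ ^ 2)
    (hSf : HasSum (fun j => (v j * w j) • proj (V j) (adjoint (Γ j) (Λ j (proj (W j) f))))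
      (S f)) :
    ‖S f‖ ^ 2 ≤ D * ∑' j, w j ^ 2 * ‖Λ j (proj (W j) f)‖ ^ 2 := by
  have hnorm : ∀ j, ‖w j • Λ j (proj (W j) f)‖ ^ 2 = w j ^ 2 * ‖Λ j (proj (W j) f)‖ ^ 2 :=
    fun j => by rw [norm_smul, Real.norm_eq_abs, mul_pow, sq_abs]
  simp only [← hnorm] at hΛf ⊢
  refine norm_sq_le_of_hasSum_synthesis V v Γ hD _ hΛf hΓSf ?_
  simpa only [map_smul_of_tower, mul_smul] using hSf

end GFusion

theorem stmt11_general
    {ι E : Type*} [NormedAddCommGroup E] [InnerProductSpace ℂ E] [CompleteSpace E]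
    {G : ι → Type*} [∀ j, NormedAddCommGroup (G j)] [∀ j, InnerProductSpace ℂ (G j)]
    [∀ j, CompleteSpace (G j)]
    (W V' : ι → Submodule ℂ E) [∀ j, CompleteSpace (W j)] [∀ j, CompleteSpace (V' j)]
    (w v : ι → ℝ)
    (Λ Γ : ∀ j, E →L[ℂ] G j)
    (D₁ D₂ : ℝ)
    (hΛ : ∀ f : E, Summable (fun j => (w j) ^ 2 * ‖Λ j (proj (W j) f)‖ ^ 2) ∧
      ∑' j, (w j) ^ 2 * ‖Λ j (proj (W j) f)‖ ^ 2 ≤ D₁ * ‖f‖ ^ 2)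
    (hΓ : ∀ f : E, Summable (fun j => (v j) ^ 2 * ‖Γ j (proj (V' j) f)‖ ^ 2) ∧
      ∑' j, (v j) ^ 2 * ‖Γ j (proj (V' j) f)‖ ^ 2 ≤ D₂ * ‖f‖ ^ 2)
    (S : E →L[ℂ] E)
    (hS : ∀ f : E, HasSum
      (fun j => (v j * w j) • proj (V' j)
        (ContinuousLinearMap.adjoint (Γ j) (Λ j (proj (W j) f)))) (S f))
    (M : ℝ) (hM : 0 < M) (hMS : ∀ f : E, M * ‖f‖ ≤ ‖S f‖) :
    ∀ f : E,
      M ^ 2 / D₂ * ‖f‖ ^ 2 ≤ ∑' j, (w j) ^ 2 * ‖Λ j (proj (W j) f)‖ ^ 2 ∧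
      ∑' j, (w j) ^ 2 * ‖Λ j (proj (W j) f)‖ ^ 2 ≤ D₁ * ‖f‖ ^ 2 := by
  intro f
  refine ⟨?_, (hΛ f).2⟩
  have hA : 0 ≤ ∑' j, (w j) ^ 2 * ‖Λ j (proj (W j) f)‖ ^ 2 := tsum_nonneg fun j => by positivity
  rcases le_or_gt D₂ 0 with hD | hD
  · exact (mul_nonpos_of_nonpos_of_nonneg (div_nonpos_of_nonneg_of_nonpos (sq_nonneg M) hD)
      (sq_nonneg _)).trans hA
  have hSf := norm_sq_frameOperator_le W V' w v Λ Γ hD.le S f (hΛ f).1 (hΓ (S f)) (hS f)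
  have hMf : (M * ‖f‖) ^ 2 ≤ ‖S f‖ ^ 2 :=
    pow_le_pow_left₀ (mul_nonneg hM.le (norm_nonneg f)) (hMS f) 2
  rw [div_mul_eq_mul_div, div_le_iff₀' hD, ← mul_pow]
  exact hMf.trans hSf

/-- if S_{ΓΛ} is bounded below by M, then Λ is a g-fusion frame with bounds
M²/D₂ and D₁. -/
theorem stmt11
    {ι E : Type*} [NormedAddCommGroup E] [InnerProductSpace ℂ E] [CompleteSpace E]
    {G : ι → Type*} [∀ j, NormedAddCommGroup (G j)] [∀ j, InnerProductSpace ℂ (G j)]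
    [∀ j, CompleteSpace (G j)]
    (W V' : ι → Submodule ℂ E) [∀ j, CompleteSpace (W j)] [∀ j, CompleteSpace (V' j)]
    (w v : ι → ℝ) (hw : ∀ j, 0 < w j) (hv : ∀ j, 0 < v j)
    (Λ Γ : ∀ j, E →L[ℂ] G j)
    (D₁ D₂ : ℝ)
    (hΛ : ∀ f : E, Summable (fun j => (w j) ^ 2 * ‖Λ j (proj (W j) f)‖ ^ 2) ∧
      ∑' j, (w j) ^ 2 * ‖Λ j (proj (W j) f)‖ ^ 2 ≤ D₁ * ‖f‖ ^ 2)
    (hΓ : ∀ f : E, Summable (fun j => (v j) ^ 2 * ‖Γ j (proj (V' j) f)‖ ^ 2) ∧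
      ∑' j, (v j) ^ 2 * ‖Γ j (proj (V' j) f)‖ ^ 2 ≤ D₂ * ‖f‖ ^ 2)
    (S : E →L[ℂ] E)
    (hS : ∀ f : E, HasSum
      (fun j => (v j * w j) • proj (V' j)
        (ContinuousLinearMap.adjoint (Γ j) (Λ j (proj (W j) f)))) (S f))
    (M : ℝ) (hM : 0 < M) (hMS : ∀ f : E, M * ‖f‖ ≤ ‖S f‖) :
    ∀ f : E,
      M ^ 2 / D₂ * ‖f‖ ^ 2 ≤ ∑' j, (w j) ^ 2 * ‖Λ j (proj (W j) f)‖ ^ 2 ∧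
      ∑' j, (w j) ^ 2 * ‖Λ j (proj (W j) f)‖ ^ 2 ≤ D₁ * ‖f‖ ^ 2 :=
  stmt11_general W V' w v Λ Γ D₁ D₂ hΛ hΓ S hS M hM hMS
end

section
/- Let Λ, Γ be g-fusion Bessel sequences in H with bounds D₁, D₂ and frame operator S_{ΓΛ}. If there exist λ₁ < 1 and λ₂ > −1 such that ‖f − S_{ΓΛ} f‖ ≤ λ₁‖f‖ + λ₂‖S_{ΓΛ} f‖ for all f ∈ H, then Λ is a g-fusion frame for H with lower bound (1/D₂)·((1−λ₁)/(1+λ₂))² and upper bound D₁. -/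
/-!
Expanding `⟪S f, S f⟫` along the series defining `S f` and applying Cauchy–Schwarz first to each
term and then to the sum gives `‖S f‖² ≤ √D₂ ‖S f‖ · √(∑ w_j² ‖Λ_j P_{W_j} f‖²)`, hence
`‖S f‖² ≤ D₂ ∑ w_j² ‖Λ_j P_{W_j} f‖²`. The reverse triangle inequality turns the perturbation
hypothesis into `(1 - λ₁) ‖f‖ ≤ (1 + λ₂) ‖S f‖`, and the two combine to the lower frame bound.
-/

open ContinuousLinearMap

open scoped ComplexInnerProductSpace

theorem Real.summable_and_tsum_mul_le_sqrt_mul_sqrt {ι : Type*} {f g : ι → ℝ}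
    (hf : ∀ i, 0 ≤ f i) (hg : ∀ i, 0 ≤ g i)
    (hf_sum : Summable fun i => f i ^ 2) (hg_sum : Summable fun i => g i ^ 2) :
    (Summable fun i => f i * g i) ∧
      ∑' i, f i * g i ≤ √(∑' i, f i ^ 2) * √(∑' i, g i ^ 2) := by
  have h := Real.summable_and_inner_le_Lp_mul_Lq_tsum_of_nonneg .two_two hf hg
    (by simpa only [Real.rpow_two] using hf_sum) (by simpa only [Real.rpow_two] using hg_sum)
  simpa only [Real.rpow_two, Real.sqrt_eq_rpow] using h

theorem inner_proj_adjoint_apply {E F : Type*} [NormedAddCommGroup E] [InnerProductSpace ℂ E]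
    [CompleteSpace E] [NormedAddCommGroup F] [InnerProductSpace ℂ F] [CompleteSpace F]
    (V : Submodule ℂ E) [CompleteSpace V] (A : E →L[ℂ] F) (g : E) (x : F) :
    ⟪g, proj V (adjoint A x)⟫ = ⟪A (proj V g), x⟫ := by
  simp only [_root_.proj, comp_apply, Submodule.subtypeL_apply]
  rw [← Submodule.starProjection_apply, ← Submodule.starProjection_apply,
    ← Submodule.inner_starProjection_left_eq_right, adjoint_inner_right]

theorem div_mul_norm_le_norm_of_norm_sub_le {E : Type*} [SeminormedAddCommGroup E] {x y : E}
    {lam₁ lam₂ : ℝ} (h2 : -1 < lam₂) (h : ‖x - y‖ ≤ lam₁ * ‖x‖ + lam₂ * ‖y‖) :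
    (1 - lam₁) / (1 + lam₂) * ‖x‖ ≤ ‖y‖ := by
  rw [div_mul_eq_mul_div, div_le_iff₀ (by linarith)]
  linarith [norm_sub_norm_le x y]

section Bessel

variable {ι E : Type*} [NormedAddCommGroup E] [InnerProductSpace ℂ E] [CompleteSpace E]
  {G : ι → Type*} [∀ j, NormedAddCommGroup (G j)] [∀ j, InnerProductSpace ℂ (G j)]
  [∀ j, CompleteSpace (G j)] (V : ι → Submodule ℂ E) [∀ j, CompleteSpace (V j)]
  (Γ : ∀ j, E →L[ℂ] G j) (a b : ι → ℝ) (y : ∀ j, G j) {s : E}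

theorem norm_sq_le_sqrt_mul_sqrt_of_hasSum_proj_adjoint
    (hs : HasSum (fun j => (a j * b j) • proj (V j) (adjoint (Γ j) (y j))) s)
    (hΓ : Summable fun j => a j ^ 2 * ‖Γ j (proj (V j) s)‖ ^ 2)
    (hy : Summable fun j => b j ^ 2 * ‖y j‖ ^ 2) :
    ‖s‖ ^ 2 ≤ √(∑' j, a j ^ 2 * ‖Γ j (proj (V j) s)‖ ^ 2) * √(∑' j, b j ^ 2 * ‖y j‖ ^ 2) := by
  have hsq (c x : ℝ) : (|c| * x) ^ 2 = c ^ 2 * x ^ 2 := by rw [mul_pow, sq_abs]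
  obtain ⟨hsum, hCS⟩ := Real.summable_and_tsum_mul_le_sqrt_mul_sqrt
    (f := fun j => |a j| * ‖Γ j (proj (V j) s)‖) (g := fun j => |b j| * ‖y j‖)
    (fun _ => by positivity) (fun _ => by positivity)
    (by simpa only [hsq] using hΓ) (by simpa only [hsq] using hy)
  have hinner : HasSum (fun j => ((a j * b j : ℝ) : ℂ) * ⟪Γ j (proj (V j) s), y j⟫) ⟪s, s⟫ := by
    have h := hs.mapL (innerSL ℂ s)
    simp only [innerSL_apply_apply, RCLike.real_smul_eq_coe_smul (K := ℂ), inner_smul_right,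
      inner_proj_adjoint_apply] at h
    exact h
  have hbound (j : ι) : ‖((a j * b j : ℝ) : ℂ) * ⟪Γ j (proj (V j) s), y j⟫‖ ≤
      |a j| * ‖Γ j (proj (V j) s)‖ * (|b j| * ‖y j‖) := by
    rw [norm_mul, Complex.norm_real, Real.norm_eq_abs, abs_mul]
    calc |a j| * |b j| * ‖⟪Γ j (proj (V j) s), y j⟫‖
        ≤ |a j| * |b j| * (‖Γ j (proj (V j) s)‖ * ‖y j‖) := by gcongr; exact norm_inner_le_norm _ _
      _ = _ := by ring
  calc ‖s‖ ^ 2 = ‖⟪s, s⟫‖ := by simp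
    _ ≤ ∑' j, |a j| * ‖Γ j (proj (V j) s)‖ * (|b j| * ‖y j‖) :=
      hinner.norm_le_of_bounded hsum.hasSum hbound
    _ ≤ _ := by simpa only [hsq] using hCS

theorem norm_sq_le_mul_tsum_of_hasSum_proj_adjoint {D : ℝ} (hD : 0 ≤ D)
    (hs : HasSum (fun j => (a j * b j) • proj (V j) (adjoint (Γ j) (y j))) s)
    (hΓ : Summable (fun j => a j ^ 2 * ‖Γ j (proj (V j) s)‖ ^ 2) ∧
      ∑' j, a j ^ 2 * ‖Γ j (proj (V j) s)‖ ^ 2 ≤ D * ‖s‖ ^ 2)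
    (hy : Summable fun j => b j ^ 2 * ‖y j‖ ^ 2) :
    ‖s‖ ^ 2 ≤ D * ∑' j, b j ^ 2 * ‖y j‖ ^ 2 := by
  set β := ∑' j, b j ^ 2 * ‖y j‖ ^ 2
  have hβ : 0 ≤ β := tsum_nonneg fun _ => by positivity
  have hCS := norm_sq_le_sqrt_mul_sqrt_of_hasSum_proj_adjoint V Γ a b y hs hΓ.1 hy
  have hΓs : √(∑' j, a j ^ 2 * ‖Γ j (proj (V j) s)‖ ^ 2) ≤ √D * ‖s‖ := by
    rw [← Real.sqrt_sq (norm_nonneg s), ← Real.sqrt_mul hD]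
    exact Real.sqrt_le_sqrt hΓ.2
  have hnorm : ‖s‖ ≤ √D * √β := by
    rcases (norm_nonneg s).eq_or_lt with h0 | hpos
    · rw [← h0]; positivity
    · nlinarith [Real.sqrt_nonneg β]
  calc ‖s‖ ^ 2 ≤ (√D * √β) ^ 2 := by gcongr
    _ = D * β := by rw [mul_pow, Real.sq_sqrt hD, Real.sq_sqrt hβ]

end Bessel

theorem stmt12_general
    {ι E : Type*} [NormedAddCommGroup E] [InnerProductSpace ℂ E] [CompleteSpace E]
    {G : ι → Type*} [∀ j, NormedAddCommGroup (G j)] [∀ j, InnerProductSpace ℂ (G j)]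
    [∀ j, CompleteSpace (G j)]
    (W V' : ι → Submodule ℂ E) [∀ j, CompleteSpace (W j)] [∀ j, CompleteSpace (V' j)]
    (w v : ι → ℝ)
    (Λ Γ : ∀ j, E →L[ℂ] G j)
    (D₁ D₂ : ℝ)
    (hΛ : ∀ f : E, Summable (fun j => (w j) ^ 2 * ‖Λ j (proj (W j) f)‖ ^ 2) ∧
      ∑' j, (w j) ^ 2 * ‖Λ j (proj (W j) f)‖ ^ 2 ≤ D₁ * ‖f‖ ^ 2)
    (hΓ : ∀ f : E, Summable (fun j => (v j) ^ 2 * ‖Γ j (proj (V' j) f)‖ ^ 2) ∧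
      ∑' j, (v j) ^ 2 * ‖Γ j (proj (V' j) f)‖ ^ 2 ≤ D₂ * ‖f‖ ^ 2)
    (S : E →L[ℂ] E)
    (hS : ∀ f : E, HasSum
      (fun j => (v j * w j) • proj (V' j)
        (ContinuousLinearMap.adjoint (Γ j) (Λ j (proj (W j) f)))) (S f))
    (lam₁ lam₂ : ℝ) (h1 : lam₁ < 1) (h2 : -1 < lam₂)
    (hper : ∀ f : E, ‖f - S f‖ ≤ lam₁ * ‖f‖ + lam₂ * ‖S f‖) :
    ∀ f : E,
      1 / D₂ * ((1 - lam₁) / (1 + lam₂)) ^ 2 * ‖f‖ ^ 2 ≤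
        ∑' j, (w j) ^ 2 * ‖Λ j (proj (W j) f)‖ ^ 2 ∧
      ∑' j, (w j) ^ 2 * ‖Λ j (proj (W j) f)‖ ^ 2 ≤ D₁ * ‖f‖ ^ 2 := by
  intro f
  refine ⟨?_, (hΛ f).2⟩
  have hα : 0 ≤ ∑' j, (w j) ^ 2 * ‖Λ j (proj (W j) f)‖ ^ 2 := tsum_nonneg fun _ => by positivity
  rcases le_or_gt D₂ 0 with hD | hD
  · have : 1 / D₂ * (((1 - lam₁) / (1 + lam₂)) ^ 2 * ‖f‖ ^ 2) ≤ 0 :=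
      mul_nonpos_of_nonpos_of_nonneg (one_div_nonpos.2 hD) (by positivity)
    linarith
  have hlower : 0 ≤ (1 - lam₁) / (1 + lam₂) * ‖f‖ :=
    mul_nonneg (div_nonneg (by linarith) (by linarith)) (norm_nonneg f)
  have hSf := norm_sq_le_mul_tsum_of_hasSum_proj_adjoint V' Γ v w _ hD.le (hS f) (hΓ (S f))
    (hΛ f).1
  calc 1 / D₂ * ((1 - lam₁) / (1 + lam₂)) ^ 2 * ‖f‖ ^ 2
      = ((1 - lam₁) / (1 + lam₂) * ‖f‖) ^ 2 / D₂ := by ring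
    _ ≤ ‖S f‖ ^ 2 / D₂ := by
      gcongr; exact div_mul_norm_le_norm_of_norm_sub_le h2 (hper f)
    _ ≤ _ := by rw [div_le_iff₀ hD]; linarith

/-- if ‖f − S_{ΓΛ} f‖ ≤ λ₁‖f‖ + λ₂‖S_{ΓΛ} f‖ with λ₁ < 1, λ₂ > −1, then Λ is a
g-fusion frame with bounds (1/D₂)((1−λ₁)/(1+λ₂))² and D₁. -/
theorem stmt12
    {ι E : Type*} [NormedAddCommGroup E] [InnerProductSpace ℂ E] [CompleteSpace E]
    {G : ι → Type*} [∀ j, NormedAddCommGroup (G j)] [∀ j, InnerProductSpace ℂ (G j)]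
    [∀ j, CompleteSpace (G j)]
    (W V' : ι → Submodule ℂ E) [∀ j, CompleteSpace (W j)] [∀ j, CompleteSpace (V' j)]
    (w v : ι → ℝ) (hw : ∀ j, 0 < w j) (hv : ∀ j, 0 < v j)
    (Λ Γ : ∀ j, E →L[ℂ] G j)
    (D₁ D₂ : ℝ)
    (hΛ : ∀ f : E, Summable (fun j => (w j) ^ 2 * ‖Λ j (proj (W j) f)‖ ^ 2) ∧
      ∑' j, (w j) ^ 2 * ‖Λ j (proj (W j) f)‖ ^ 2 ≤ D₁ * ‖f‖ ^ 2)
    (hΓ : ∀ f : E, Summable (fun j => (v j) ^ 2 * ‖Γ j (proj (V' j) f)‖ ^ 2) ∧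
      ∑' j, (v j) ^ 2 * ‖Γ j (proj (V' j) f)‖ ^ 2 ≤ D₂ * ‖f‖ ^ 2)
    (S : E →L[ℂ] E)
    (hS : ∀ f : E, HasSum
      (fun j => (v j * w j) • proj (V' j)
        (ContinuousLinearMap.adjoint (Γ j) (Λ j (proj (W j) f)))) (S f))
    (lam₁ lam₂ : ℝ) (h1 : lam₁ < 1) (h2 : -1 < lam₂)
    (hper : ∀ f : E, ‖f - S f‖ ≤ lam₁ * ‖f‖ + lam₂ * ‖S f‖) :
    ∀ f : E,
      1 / D₂ * ((1 - lam₁) / (1 + lam₂)) ^ 2 * ‖f‖ ^ 2 ≤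
        ∑' j, (w j) ^ 2 * ‖Λ j (proj (W j) f)‖ ^ 2 ∧
      ∑' j, (w j) ^ 2 * ‖Λ j (proj (W j) f)‖ ^ 2 ≤ D₁ * ‖f‖ ^ 2 :=
  stmt12_general W V' w v Λ Γ D₁ D₂ hΛ hΓ S hS lam₁ lam₂ h1 h2 hper
end

section
/- Let Λ, Γ be g-fusion Bessel sequences in H with bounds D₁, D₂ and frame operator S_{ΓΛ}. If there exists K ∈ B(H) such that f = Σ_{j∈J} v_j w_j K P_{V_j} Γ_j* Λ_j P_{W_j} f for all f ∈ H, then Λ is a g-fusion frame for H with lower bound 1/(D₂‖K‖²) and upper bound D₁. -/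
open ContinuousLinearMap

/-!
Pairing the reconstruction identity with `f` and moving `K`, `P_{V_j}` and `Γ_j*` across the inner
product writes `‖f‖² = ∑ⱼ ⟪vⱼ Γⱼ P_{Vⱼ} K* f, wⱼ Λⱼ P_{Wⱼ} f⟫`, an inner product in the Hilbert sum
`ℓ²(⊕ⱼ Gⱼ)`. Cauchy–Schwarz there, the Bessel bound of `Γ` at `K* f` and `‖K* f‖ ≤ ‖K‖ ‖f‖` give
`‖f‖⁴ ≤ D₂ ‖K‖² ‖f‖² ∑ⱼ wⱼ² ‖Λⱼ P_{Wⱼ} f‖²`.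
-/

section CauchySchwarz

variable {ι 𝕜 : Type*} [RCLike 𝕜] {G : ι → Type*} [∀ j, NormedAddCommGroup (G j)]
  [∀ j, InnerProductSpace 𝕜 (G j)]

theorem memℓp_two_iff_summable_sq {x : ∀ j, G j} :
    Memℓp x 2 ↔ Summable fun j => ‖x j‖ ^ 2 := by
  rw [memℓp_gen_iff (by norm_num)]
  norm_num [Real.rpow_two]

theorem lp.norm_sq_eq_tsum (x : lp G 2) : ‖x‖ ^ 2 = ∑' j, ‖x j‖ ^ 2 := by
  simpa [Real.rpow_two] using lp.norm_rpow_eq_tsum (p := 2) (by norm_num) x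

theorem norm_tsum_inner_sq_le {x y : ∀ j, G j} (hx : Summable fun j => ‖x j‖ ^ 2)
    (hy : Summable fun j => ‖y j‖ ^ 2) :
    ‖∑' j, inner 𝕜 (x j) (y j)‖ ^ 2 ≤ (∑' j, ‖x j‖ ^ 2) * ∑' j, ‖y j‖ ^ 2 := by
  let X : lp G 2 := ⟨x, memℓp_two_iff_summable_sq.2 hx⟩
  let Y : lp G 2 := ⟨y, memℓp_two_iff_summable_sq.2 hy⟩
  calc ‖∑' j, inner 𝕜 (x j) (y j)‖ ^ 2 = ‖inner 𝕜 X Y‖ ^ 2 := by rw [lp.inner_eq_tsum]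
    _ ≤ (‖X‖ * ‖Y‖) ^ 2 := by gcongr; exact norm_inner_le_norm X Y
    _ = (∑' j, ‖x j‖ ^ 2) * ∑' j, ‖y j‖ ^ 2 := by
      rw [mul_pow, lp.norm_sq_eq_tsum, lp.norm_sq_eq_tsum]

end CauchySchwarz

theorem proj_eq_starProjection {E : Type*} [NormedAddCommGroup E] [InnerProductSpace ℂ E]
    (V : Submodule ℂ E) [CompleteSpace V] : proj V = V.starProjection :=
  rfl

theorem inner_proj_adjoint_right {E F : Type*} [NormedAddCommGroup E] [InnerProductSpace ℂ E]
    [CompleteSpace E] [NormedAddCommGroup F] [InnerProductSpace ℂ F] [CompleteSpace F]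
    (V : Submodule ℂ E) [CompleteSpace V] (K : E →L[ℂ] E) (Γ : E →L[ℂ] F) (f : E) (y : F) :
    inner ℂ f (K (proj V (adjoint Γ y))) = inner ℂ (Γ (proj V (adjoint K f))) y := by
  rw [← adjoint_inner_left K, proj_eq_starProjection, ← V.inner_starProjection_left_eq_right,
    adjoint_inner_right]

theorem norm_ofReal_smul_sq {F : Type*} [NormedAddCommGroup F] [NormedSpace ℂ F] (r : ℝ) (z : F) :
    ‖(r : ℂ) • z‖ ^ 2 = r ^ 2 * ‖z‖ ^ 2 := by
  rw [norm_smul, Complex.norm_real, mul_pow, Real.norm_eq_abs, sq_abs]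

theorem norm_sq_sq_le_of_hasSum_reconstruction
    {ι E : Type*} [NormedAddCommGroup E] [InnerProductSpace ℂ E] [CompleteSpace E]
    {G : ι → Type*} [∀ j, NormedAddCommGroup (G j)] [∀ j, InnerProductSpace ℂ (G j)]
    [∀ j, CompleteSpace (G j)]
    (W V : ι → Submodule ℂ E) [∀ j, CompleteSpace (W j)] [∀ j, CompleteSpace (V j)]
    (w v : ι → ℝ) (Λ Γ : ∀ j, E →L[ℂ] G j) (K : E →L[ℂ] E) (f : E)
    (hK : HasSum (fun j => (v j * w j) • K (proj (V j) (adjoint (Γ j) (Λ j (proj (W j) f))))) f)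
    (hΛ : Summable fun j => w j ^ 2 * ‖Λ j (proj (W j) f)‖ ^ 2)
    (hΓ : Summable fun j => v j ^ 2 * ‖Γ j (proj (V j) (adjoint K f))‖ ^ 2) :
    (‖f‖ ^ 2) ^ 2 ≤ (∑' j, v j ^ 2 * ‖Γ j (proj (V j) (adjoint K f))‖ ^ 2) *
      ∑' j, w j ^ 2 * ‖Λ j (proj (W j) f)‖ ^ 2 := by
  set x : ∀ j, G j := fun j => (v j : ℂ) • Γ j (proj (V j) (adjoint K f))
  set y : ∀ j, G j := fun j => (w j : ℂ) • Λ j (proj (W j) f)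
  have hxy : HasSum (fun j => inner ℂ (x j) (y j)) (inner ℂ f f) := by
    have hterm : ∀ j, inner ℂ (x j) (y j) =
        innerSL ℂ f ((v j * w j) • K (proj (V j) (adjoint (Γ j) (Λ j (proj (W j) f))))) := by
      intro j
      simp only [x, y, innerSL_apply_apply, inner_smul_left, inner_smul_right, Complex.conj_ofReal,
        ← Complex.coe_smul, inner_proj_adjoint_right]
      push_cast
      ring
    rw [funext hterm]
    exact hK.mapL (innerSL ℂ f)
  have hx : Summable fun j => ‖x j‖ ^ 2 := by simpa only [x, norm_ofReal_smul_sq] using hΓ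
  have hy : Summable fun j => ‖y j‖ ^ 2 := by simpa only [y, norm_ofReal_smul_sq] using hΛ
  have hff : ‖inner ℂ f f‖ = ‖f‖ ^ 2 := by
    rw [inner_self_eq_norm_sq_to_K, norm_pow, RCLike.norm_ofReal, abs_norm]
  simpa only [hxy.tsum_eq, hff, x, y, norm_ofReal_smul_sq] using norm_tsum_inner_sq_le (𝕜 := ℂ) hx hy

theorem stmt19_general
    {ι E : Type*} [NormedAddCommGroup E] [InnerProductSpace ℂ E] [CompleteSpace E]
    {G : ι → Type*} [∀ j, NormedAddCommGroup (G j)] [∀ j, InnerProductSpace ℂ (G j)]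
    [∀ j, CompleteSpace (G j)]
    (W V' : ι → Submodule ℂ E) [∀ j, CompleteSpace (W j)] [∀ j, CompleteSpace (V' j)]
    (w v : ι → ℝ)
    (Λ Γ : ∀ j, E →L[ℂ] G j)
    (D₁ D₂ : ℝ)
    (hΛ : ∀ f : E, Summable (fun j => (w j) ^ 2 * ‖Λ j (proj (W j) f)‖ ^ 2) ∧
      ∑' j, (w j) ^ 2 * ‖Λ j (proj (W j) f)‖ ^ 2 ≤ D₁ * ‖f‖ ^ 2)
    (hΓ : ∀ f : E, Summable (fun j => (v j) ^ 2 * ‖Γ j (proj (V' j) f)‖ ^ 2) ∧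
      ∑' j, (v j) ^ 2 * ‖Γ j (proj (V' j) f)‖ ^ 2 ≤ D₂ * ‖f‖ ^ 2)
    (K : E →L[ℂ] E)
    (hK : ∀ f : E, HasSum
      (fun j => (v j * w j) • K (proj (V' j)
        (ContinuousLinearMap.adjoint (Γ j) (Λ j (proj (W j) f))))) f) :
    ∀ f : E,
      1 / (D₂ * ‖K‖ ^ 2) * ‖f‖ ^ 2 ≤ ∑' j, (w j) ^ 2 * ‖Λ j (proj (W j) f)‖ ^ 2 ∧
      ∑' j, (w j) ^ 2 * ‖Λ j (proj (W j) f)‖ ^ 2 ≤ D₁ * ‖f‖ ^ 2 := by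
  intro f
  refine ⟨?_, (hΛ f).2⟩
  set A := ∑' j, w j ^ 2 * ‖Λ j (proj (W j) f)‖ ^ 2
  have hA : 0 ≤ A := tsum_nonneg fun j => by positivity
  rcases eq_or_ne f 0 with rfl | hf0
  · simpa using hA
  have hf : 0 < ‖f‖ ^ 2 := by positivity
  have hD₂ : 0 ≤ D₂ :=
    nonneg_of_mul_nonneg_left ((tsum_nonneg fun j => by positivity).trans (hΓ f).2) hf
  have hKf : ‖adjoint K f‖ ≤ ‖K‖ * ‖f‖ := by
    simpa only [LinearIsometryEquiv.norm_map] using (adjoint K).le_opNorm f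
  have hB : ∑' j, v j ^ 2 * ‖Γ j (proj (V' j) (adjoint K f))‖ ^ 2 ≤ D₂ * ‖K‖ ^ 2 * ‖f‖ ^ 2 :=
    calc _ ≤ D₂ * ‖adjoint K f‖ ^ 2 := (hΓ _).2
      _ ≤ D₂ * (‖K‖ * ‖f‖) ^ 2 := by gcongr
      _ = D₂ * ‖K‖ ^ 2 * ‖f‖ ^ 2 := by ring
  have hfA : (‖f‖ ^ 2) ^ 2 ≤ D₂ * ‖K‖ ^ 2 * ‖f‖ ^ 2 * A :=
    (norm_sq_sq_le_of_hasSum_reconstruction W V' w v Λ Γ K f (hK f) (hΛ f).1 (hΓ (adjoint K f)).1).trans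
      (mul_le_mul_of_nonneg_right hB hA)
  rw [one_div_mul_eq_div]
  refine div_le_of_le_mul₀ (by positivity) hA (le_of_mul_le_mul_right ?_ hf)
  linarith

/-- if f = Σ_j v_j w_j K P_{V_j} Γ_j* Λ_j P_{W_j} f for all f, then Λ is a
g-fusion frame with bounds 1/(D₂‖K‖²) and D₁. -/
theorem stmt19
    {ι E : Type*} [NormedAddCommGroup E] [InnerProductSpace ℂ E] [CompleteSpace E]
    {G : ι → Type*} [∀ j, NormedAddCommGroup (G j)] [∀ j, InnerProductSpace ℂ (G j)]
    [∀ j, CompleteSpace (G j)]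
    (W V' : ι → Submodule ℂ E) [∀ j, CompleteSpace (W j)] [∀ j, CompleteSpace (V' j)]
    (w v : ι → ℝ) (hw : ∀ j, 0 < w j) (hv : ∀ j, 0 < v j)
    (Λ Γ : ∀ j, E →L[ℂ] G j)
    (D₁ D₂ : ℝ)
    (hΛ : ∀ f : E, Summable (fun j => (w j) ^ 2 * ‖Λ j (proj (W j) f)‖ ^ 2) ∧
      ∑' j, (w j) ^ 2 * ‖Λ j (proj (W j) f)‖ ^ 2 ≤ D₁ * ‖f‖ ^ 2)
    (hΓ : ∀ f : E, Summable (fun j => (v j) ^ 2 * ‖Γ j (proj (V' j) f)‖ ^ 2) ∧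
      ∑' j, (v j) ^ 2 * ‖Γ j (proj (V' j) f)‖ ^ 2 ≤ D₂ * ‖f‖ ^ 2)
    (S : E →L[ℂ] E)
    (hS : ∀ f : E, HasSum
      (fun j => (v j * w j) • proj (V' j)
        (ContinuousLinearMap.adjoint (Γ j) (Λ j (proj (W j) f)))) (S f))
    (K : E →L[ℂ] E)
    (hK : ∀ f : E, HasSum
      (fun j => (v j * w j) • K (proj (V' j)
        (ContinuousLinearMap.adjoint (Γ j) (Λ j (proj (W j) f))))) f) :
    ∀ f : E,
      1 / (D₂ * ‖K‖ ^ 2) * ‖f‖ ^ 2 ≤ ∑' j, (w j) ^ 2 * ‖Λ j (proj (W j) f)‖ ^ 2 ∧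
      ∑' j, (w j) ^ 2 * ‖Λ j (proj (W j) f)‖ ^ 2 ≤ D₁ * ‖f‖ ^ 2 :=
  stmt19_general W V' w v Λ Γ D₁ D₂ hΛ hΓ K hK
end
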